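/- arXiv:2202.01544 — 3 statements merged into one kernel-verified Lean document; each statement's English description precedes it below -/
import Mathlib

section
/- For any n ∈ ℕ and any sequence a, one has x^n = ∑_{k=0}^{n} h_{n-k}(a_1, ..., a_{k+1}) (x|a)_k, where h_m denotes the complete homogeneous symmetric polynomial of degree m. -/
/-!
Induct on `n`. Multiplying by `x` sends `(x|a)_k` to `(x|a)_{k+1} + a_{k+1} (x|a)_k`, and the
coefficients recombine through the Pascal-type recursion
`h_{m+1}(a_1, …, a_{r+1}) = h_{m+1}(a_1, …, a_r) + a_{r+1} h_m(a_1, …, a_{r+1})`,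
obtained by sorting multisets according to whether they contain `a_{r+1}`.
-/

/-- Complete homogeneous symmetric polynomial `h_m` in the first `r` entries of `a`
(indexed `a 0, …, a (r-1)`, corresponding to `a_1, …, a_r`). -/
noncomputable def hsymm (r m : ℕ) (a : ℕ → ℂ) : ℂ :=
  ∑ σ ∈ (Finset.range r).sym m, (Multiset.map a σ.val).prod

open Finset

theorem Finset.sum_prod_map_insert_sym_succ {α R : Type*} [DecidableEq α] [CommSemiring R]
    (f : α → R) {s : Finset α} {b : α} (hb : b ∉ s) (m : ℕ) :
    ∑ σ ∈ (insert b s).sym (m + 1), (σ.1.map f).prod =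
      ∑ σ ∈ s.sym (m + 1), (σ.1.map f).prod +
        f b * ∑ σ ∈ (insert b s).sym m, (σ.1.map f).prod := by
  have avoiding_b : ((insert b s).sym (m + 1)).filter (b ∉ ·) = s.sym (m + 1) := by
    ext σ
    simp only [mem_filter, mem_sym_iff, mem_insert]
    exact ⟨fun ⟨h, hσ⟩ c hc => (h c hc).resolve_left (by rintro rfl; exact hσ hc),
      fun h => ⟨fun c hc => Or.inr (h c hc), fun hσ => hb (h b hσ)⟩⟩
  have containing_b :
      ((insert b s).sym (m + 1)).filter (b ∈ ·) = ((insert b s).sym m).image (Sym.cons b) := by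
    ext σ
    simp only [mem_filter, mem_image]
    constructor
    · rintro ⟨h, hσ⟩
      refine ⟨σ.erase b hσ, mem_sym_iff.2 fun c hc => ?_, Sym.cons_erase hσ⟩
      exact mem_sym_iff.1 h c (Multiset.mem_of_mem_erase hc)
    · rintro ⟨τ, hτ, rfl⟩
      refine ⟨mem_sym_iff.2 fun c hc => ?_, Sym.mem_cons_self b τ⟩
      rcases Sym.mem_cons.1 hc with rfl | hc
      · exact mem_insert_self c s
      · exact mem_sym_iff.1 hτ c hc
  rw [← sum_filter_not_add_sum_filter _ (b ∈ ·), avoiding_b, containing_b,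
    sum_image fun τ _ τ' _ => (Sym.cons_inj_right b τ τ').1, mul_sum]
  refine congrArg _ (sum_congr rfl fun τ _ => ?_)
  exact (congrArg Multiset.prod (Multiset.map_cons f b τ.1)).trans (Multiset.prod_cons _ _)

lemma hsymm_zero_right (r : ℕ) (a : ℕ → ℂ) : hsymm r 0 a = 1 := by
  simp only [hsymm, sym_zero, Sym.val_eq_coe, sum_singleton]
  rfl

lemma hsymm_zero_left (m : ℕ) (a : ℕ → ℂ) : hsymm 0 (m + 1) a = 0 := by
  simp [hsymm]

lemma hsymm_succ_succ (r m : ℕ) (a : ℕ → ℂ) :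
    hsymm (r + 1) (m + 1) a = hsymm r (m + 1) a + a r * hsymm (r + 1) m a := by
  simp only [hsymm, range_add_one]
  exact sum_prod_map_insert_sym_succ a notMem_range_self m

lemma mul_prod_range_sub {R : Type*} [CommRing R] (x : R) (a : ℕ → R) (k : ℕ) :
    x * ∏ i ∈ range k, (x - a i) =
      ∏ i ∈ range (k + 1), (x - a i) + a k * ∏ i ∈ range k, (x - a i) := by
  rw [prod_range_succ]
  ring

-- Indexing by the antidiagonal avoids the truncated subtraction `n - k`.
theorem pow_eq_sum_antidiagonal_hsymm (a : ℕ → ℂ) (x : ℂ) (n : ℕ) :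
    x ^ n = ∑ p ∈ antidiagonal n, hsymm (p.1 + 1) p.2 a * ∏ i ∈ range p.1, (x - a i) := by
  induction n with
  | zero => simp [hsymm_zero_right]
  | succ n ih =>
    set P : ℕ → ℂ := fun k => ∏ i ∈ range k, (x - a i)
    -- peel the antidiagonal of `n + 1` at either end
    have shift : ∑ p ∈ antidiagonal n, hsymm (p.1 + 1) p.2 a * P (p.1 + 1) =
        P (n + 1) + ∑ p ∈ antidiagonal n, hsymm p.1 (p.2 + 1) a * P p.1 := by
      have h := (Nat.sum_antidiagonal_succ (n := n)
        (f := fun p => hsymm p.1 p.2 a * P p.1)).symm.trans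
        (Nat.sum_antidiagonal_succ' (n := n) (f := fun p => hsymm p.1 p.2 a * P p.1))
      simpa only [hsymm_zero_left, zero_mul, zero_add, hsymm_zero_right, one_mul] using h
    calc x ^ (n + 1) = x * x ^ n := pow_succ' x n
      _ = ∑ p ∈ antidiagonal n, hsymm (p.1 + 1) p.2 a * P (p.1 + 1) +
          ∑ p ∈ antidiagonal n, a p.1 * hsymm (p.1 + 1) p.2 a * P p.1 := by
        rw [ih, mul_sum, ← sum_add_distrib]
        refine sum_congr rfl fun p _ => ?_
        rw [mul_left_comm, mul_prod_range_sub]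
        ring
      _ = P (n + 1) + ∑ p ∈ antidiagonal n, hsymm (p.1 + 1) (p.2 + 1) a * P p.1 := by
        simp only [shift, hsymm_succ_succ, add_mul, sum_add_distrib, add_assoc]
      _ = _ := by
        simp only [Nat.sum_antidiagonal_succ' (n := n), hsymm_zero_right, one_mul, P]

/-- `x^n = ∑_{k=0}^{n} h_{n-k}(a_1,…,a_{k+1}) (x|a)_k`. -/
theorem stmt_3 (a : ℕ → ℂ) (x : ℂ) (n : ℕ) :
    x ^ n = ∑ k ∈ Finset.range (n + 1),
      hsymm (k + 1) (n - k) a * ∏ i ∈ Finset.range k, (x - a i) := by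
  rw [pow_eq_sum_antidiagonal_hsymm a x n]
  exact Nat.sum_antidiagonal_eq_sum_range_succ
    (fun k m => hsymm (k + 1) m a * ∏ i ∈ range k, (x - a i)) n
end

section
/- As formal power series in 1/x, for any n ∈ ℕ, x^{-n} = ∑_{k=n}^{∞} (-1)^{n-k} e_{k-n}(a_1, ..., a_{k-1}) · (x|a)_k^{-1}, where each 1/(x|a)_k is expanded as a power series in 1/x. -/
/-- Elementary symmetric polynomial `e_m` in the first `n` entries of `a`. -/
noncomputable def esymm (n m : ℕ) (a : ℕ → ℂ) : ℂ :=
  ∑ S ∈ (Finset.range n).powersetCard m, ∏ i ∈ S, a i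

/-!
Write `t = 1/x` and let `b = (0, a₀, a₁, …)`, so that `(y|b)_k = y (y|a)_{k-1}`. Since
`(1 - a_k t) / (x|a)_{k+1} = t / (x|a)_k`, the sum telescopes:
`(1 - t y) ∑_{k ≤ N} (y|b)_k / (x|a)_k = 1 - t (y|b)_{N+1} / (x|a)_N`.
The remainder is `O(t^{N+1})`, so comparing coefficients of `y^n` gives
`∑_{k ≤ N} [y^n] (y|b)_k / (x|a)_k ≡ t^n` modulo `t^{N+1}`, and by Vieta
`[y^n] (y|b)_k = (-1)^{k-n} e_{k-n}(a₀, …, a_{k-2})`.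
-/

open Finset Polynomial

/-- `1 / (x|a)_k` expanded at `x = ∞`, as a power series in `t = 1/x`. -/
noncomputable def invFactorialPower {K : Type*} [Field K] (a : ℕ → K) (k : ℕ) :
    PowerSeries K :=
  PowerSeries.X ^ k * (∏ i ∈ range k, (1 - PowerSeries.C (a i) * PowerSeries.X))⁻¹

theorem dvd_coeff_sub_pow_of_one_sub_mul_eq {R : Type*} [CommRing R] {r s d : R} {p q : R[X]}
    (hs : d ∣ s) (h : (1 - C r * X) * p = 1 - C s * q) (n : ℕ) : d ∣ p.coeff n - r ^ n := by
  have hcoeff (j : ℕ) := congrArg (coeff · j) h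
  simp only [sub_mul, one_mul, mul_assoc, coeff_sub, coeff_C_mul, coeff_one] at hcoeff
  induction n with
  | zero =>
    have h0 := hcoeff 0
    simp only [coeff_X_mul_zero, mul_zero, sub_zero, if_true] at h0
    rw [h0, pow_zero, sub_sub_cancel_left]
    exact (hs.mul_right _).neg_right
  | succ n ih =>
    have hn := hcoeff (n + 1)
    simp only [coeff_X_mul, Nat.succ_ne_zero, if_false, zero_sub] at hn
    have : p.coeff (n + 1) - r ^ (n + 1) = -(s * q.coeff (n + 1)) + r * (p.coeff n - r ^ n) := by
      linear_combination hn
    rw [this]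
    exact dvd_add (hs.mul_right _).neg_right (ih.mul_left r)

section

variable {K : Type*} [Field K] (a : ℕ → K)

theorem X_pow_dvd_invFactorialPower (k : ℕ) : PowerSeries.X ^ k ∣ invFactorialPower a k :=
  dvd_mul_right _ _

theorem invFactorialPower_succ_mul (k : ℕ) :
    invFactorialPower a (k + 1) * (1 - PowerSeries.C (a k) * PowerSeries.X) =
      PowerSeries.X * invFactorialPower a k := by
  have h : PowerSeries.constantCoeff (1 - PowerSeries.C (a k) * PowerSeries.X) ≠ 0 := by simp
  rw [invFactorialPower, invFactorialPower, prod_range_succ, PowerSeries.mul_inv_rev, pow_succ]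
  linear_combination (PowerSeries.X ^ (k + 1) * (∏ i ∈ range k,
    (1 - PowerSeries.C (a i) * PowerSeries.X))⁻¹) * PowerSeries.inv_mul_cancel _ h

theorem one_sub_X_mul_sum_invFactorialPower (b : ℕ → K) (hb₀ : b 0 = 0)
    (hb : ∀ k, b (k + 1) = a k) (N : ℕ) :
    (1 - C PowerSeries.X * X) * ∑ k ∈ range (N + 1),
        C (invFactorialPower a k) * (∏ i ∈ range k, (X - C (b i))).map PowerSeries.C =
      1 - C (PowerSeries.X * invFactorialPower a N) *
        (∏ i ∈ range (N + 1), (X - C (b i))).map PowerSeries.C := by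
  induction N with
  | zero => simp [hb₀, invFactorialPower]
  | succ N ih =>
    rw [sum_range_succ, mul_add, ih, prod_range_succ _ (N + 1), hb, Polynomial.map_mul,
      Polynomial.map_sub, Polynomial.map_X, Polynomial.map_C]
    have hstep := congrArg C (invFactorialPower_succ_mul a N)
    simp only [map_mul, map_sub, map_one] at hstep ⊢
    linear_combination ((∏ i ∈ range (N + 1), (X - C (b i))).map PowerSeries.C) * hstep

theorem X_pow_dvd_sum_sub_X_pow (b : ℕ → K) (hb₀ : b 0 = 0) (hb : ∀ k, b (k + 1) = a k)
    (N n : ℕ) :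
    PowerSeries.X ^ (N + 1) ∣ ∑ k ∈ range (N + 1),
      PowerSeries.C ((∏ i ∈ range k, (X - C (b i))).coeff n) * invFactorialPower a k
        - PowerSeries.X ^ n := by
  have hs : PowerSeries.X ^ (N + 1) ∣ PowerSeries.X * invFactorialPower a N := by
    rw [pow_succ']
    exact mul_dvd_mul_left _ (X_pow_dvd_invFactorialPower a N)
  simpa [finsetSum_coeff, coeff_C_mul, coeff_map, mul_comm] using
    dvd_coeff_sub_pow_of_one_sub_mul_eq hs (one_sub_X_mul_sum_invFactorialPower a b hb₀ hb N) n

end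

theorem coeff_prod_X_sub_C_eq_esymm (a : ℕ → ℂ) {k n : ℕ} (h : n ≤ k) :
    (∏ i ∈ range k, (X - C (a i))).coeff n = (-1) ^ (k - n) * esymm k (k - n) a := by
  have := Multiset.prod_X_sub_C_coeff ((range k).val.map a) (k := n) (by simpa using h)
  rwa [Multiset.map_map, Finset.esymm_map_val, Multiset.card_map, card_val, card_range] at this

theorem coeff_prod_X_sub_C_of_shift (a b : ℕ → ℂ) (hb₀ : b 0 = 0)
    (hb : ∀ k, b (k + 1) = a k) (k n : ℕ) :
    (∏ i ∈ range k, (X - C (b i))).coeff n =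
      if n ≤ k then (-1) ^ (k - n) * esymm (k - 1) (k - n) a else 0 := by
  split_ifs with hnk
  · rcases k with _ | k
    · simp [Nat.le_zero.1 hnk, esymm]
    rw [prod_range_succ', hb₀]
    simp only [hb, C_0, sub_zero, Nat.add_sub_cancel]
    rcases n with _ | n
    · rw [esymm, powersetCard_eq_empty.2 (by simp)]
      simp
    · rw [coeff_mul_X, coeff_prod_X_sub_C_eq_esymm a (by omega), Nat.add_sub_add_right]
  · exact coeff_eq_zero_of_natDegree_lt (by simpa using hnk)

/-- As formal power series in `t = 1/x`:
`x^{-n} = ∑_{k ≥ n} (-1)^{n-k} e_{k-n}(a_1,…,a_{k-1}) · (x|a)_k^{-1}`,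
where `1/(x|a)_k` is expanded at infinity as `t^k · (∏_{i=1}^k (1 - a_i t))⁻¹`.
The equality is asserted coefficientwise. -/
theorem stmt_5 (a : ℕ → ℂ) (n m : ℕ) :
    (PowerSeries.coeff (R := ℂ) m) ((PowerSeries.X : PowerSeries ℂ) ^ n)
      = ∑' k : ℕ,
          if n ≤ k then
            (-1 : ℂ) ^ (k - n) * esymm (k - 1) (k - n) a *
              (PowerSeries.coeff (R := ℂ) m)
                (PowerSeries.X ^ k *
                  (∏ i ∈ Finset.range k, (1 - PowerSeries.C (R := ℂ) (a i) * PowerSeries.X))⁻¹)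
          else 0 := by
  set b : ℕ → ℂ := fun i => if i = 0 then 0 else a (i - 1)
  have hb₀ : b 0 = 0 := if_pos rfl
  have hb (k : ℕ) : b (k + 1) = a k := if_neg k.succ_ne_zero
  have hterm (k : ℕ) : (if n ≤ k then (-1 : ℂ) ^ (k - n) * esymm (k - 1) (k - n) a *
      PowerSeries.coeff m (invFactorialPower a k) else 0) =
      (∏ i ∈ range k, (X - C (b i))).coeff n * PowerSeries.coeff m (invFactorialPower a k) := by
    rw [coeff_prod_X_sub_C_of_shift a b hb₀ hb, ite_mul, zero_mul]
  have hvanish (k : ℕ) (hk : k ∉ range (m + 1)) :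
      PowerSeries.coeff m (invFactorialPower a k) = 0 :=
    PowerSeries.X_pow_dvd_iff.1 (X_pow_dvd_invFactorialPower a k) m (by simpa using hk)
  have hcoeff :=
    PowerSeries.X_pow_dvd_iff.1 (X_pow_dvd_sum_sub_X_pow a b hb₀ hb m n) m m.lt_succ_self
  rw [map_sub, map_sum, sub_eq_zero] at hcoeff
  simp only [PowerSeries.coeff_C_mul] at hcoeff
  change _ = ∑' k, if n ≤ k then _ * PowerSeries.coeff m (invFactorialPower a k) else 0
  rw [← hcoeff,
    tsum_eq_sum (s := range (m + 1)) fun k hk => by rw [hterm, hvanish k hk, mul_zero]]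
  exact sum_congr rfl fun k _ => (hterm k).symm
end

section
/- Suppose A is an invertible ℤ×ℤ block matrix of the form A = diag(A^-, 1, A^+) where A^- = (A_{i,j})_{i,j<0}, A^+ = (A_{i,j})_{i,j>0}, A_{0,0} = 1, and all off-block entries vanish, and A^{-1} = diag((A^-)^{-1}, 1, (A^+)^{-1}). Then with f_k, g_k as above, ∑_{k≥0} g_k(x^{-1}) f_k(y) = ∑_{k≥0} y^k/x^k and ∑_{k<0} g_k(x^{-1}) f_k(y) = ∑_{k≥1} x^k/y^k, as formal distributions. -/
section IntSums

variable {M : Type*} [AddCommMonoid M] [TopologicalSpace M] {f : ℤ → M} {a : M}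

theorem hasSum_nat_neg_iff_of_pos_eq_zero (hf : ∀ n : ℤ, 0 < n → f n = 0) :
    HasSum (fun k : ℕ => f (-k)) a ↔ HasSum f a := by
  refine Function.Injective.hasSum_iff (fun m n h => by simpa using h) ?_
  intro n hn
  refine hf n (not_le.1 fun hle => hn ⟨(-n).toNat, ?_⟩)
  simp only
  omega

theorem hasSum_nat_add_one_iff_of_nonpos_eq_zero (hf : ∀ n : ℤ, n ≤ 0 → f n = 0) :
    HasSum (fun k : ℕ => f (k + 1)) a ↔ HasSum f a := by
  refine Function.Injective.hasSum_iff (fun m n h => by simpa using h) ?_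
  intro n hn
  refine hf n (not_lt.1 fun hlt => hn ⟨(n - 1).toNat, ?_⟩)
  simp only
  omega

end IntSums

theorem stmt_13_general (A B : ℤ → ℤ → ℂ)
    (hBblock : ∀ i j : ℤ,
      ¬((i < 0 ∧ j < 0) ∨ (i = 0 ∧ j = 0) ∨ (0 < i ∧ 0 < j)) → B i j = 0)
    (hinv : ∀ i j : ℤ, HasSum (fun k : ℤ => B i k * A k j) (if i = j then 1 else 0)) :
    ∀ r p : ℤ,
      HasSum (fun k : ℕ => B (-r) (-(k : ℤ)) * A (-(k : ℤ)) (-p))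
        (if r = p ∧ 0 ≤ r then 1 else 0) ∧
      HasSum (fun k : ℕ => B (-r) ((k : ℤ) + 1) * A ((k : ℤ) + 1) (-p))
        (if r = p ∧ r < 0 then 1 else 0) := by
  intro r p
  -- The row `-r` of `B` lives in a single block, so the full row sum `hinv` restricts to it.
  have hrow : ∀ k : ℤ, ¬(-r ≤ 0 ↔ k ≤ 0) → B (-r) k * A k (-p) = 0 := fun k hk => by
    rw [hBblock _ _ (by omega), zero_mul]
  rcases le_or_gt 0 r with hr | hr
  · have hfull := (hasSum_nat_neg_iff_of_pos_eq_zero fun k hk => hrow k (by omega)).2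
      (hinv (-r) (-p))
    refine ⟨by simpa only [neg_inj, hr, and_true] using hfull, ?_⟩
    rw [if_neg (by omega)]
    exact hasSum_zero.congr_fun fun k => hrow _ (by omega)
  · have hfull := (hasSum_nat_add_one_iff_of_nonpos_eq_zero fun k hk => hrow k (by omega)).2
      (hinv (-r) (-p))
    refine ⟨?_, by simpa only [neg_inj, hr, and_true] using hfull⟩
    rw [if_neg (by omega)]
    exact hasSum_zero.congr_fun fun k => hrow _ (by omega)

/-- For a block matrix `A = diag(A⁻, 1, A⁺)` with inverse `B = diag((A⁻)⁻¹, 1, (A⁺)⁻¹)`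
and `A_{0,0} = B_{0,0} = 1`, the distributions `f_k(x) = ∑_s A_{-k,-s} x^s`,
`g_k(x) = ∑_s B_{-s,-k} x^s` satisfy
`∑_{k≥0} g_k(x⁻¹) f_k(y) = ∑_{k≥0} y^k/x^k` and
`∑_{k<0} g_k(x⁻¹) f_k(y) = ∑_{k≥1} x^k/y^k`.
Coefficientwise (`x^{-r} y^p`): `∑_{k≥0} B_{-r,-k} A_{-k,-p} = [r = p ∧ r ≥ 0]` and
`∑_{k≥1} B_{-r,k} A_{k,-p} = [r = p ∧ r < 0]`. -/
theorem stmt_13 (A B : ℤ → ℤ → ℂ)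
    (hAblock : ∀ i j : ℤ,
      ¬((i < 0 ∧ j < 0) ∨ (i = 0 ∧ j = 0) ∨ (0 < i ∧ 0 < j)) → A i j = 0)
    (hBblock : ∀ i j : ℤ,
      ¬((i < 0 ∧ j < 0) ∨ (i = 0 ∧ j = 0) ∨ (0 < i ∧ 0 < j)) → B i j = 0)
    (hA00 : A 0 0 = 1) (hB00 : B 0 0 = 1)
    (hinv : ∀ i j : ℤ, HasSum (fun k : ℤ => B i k * A k j) (if i = j then 1 else 0)) :
    ∀ r p : ℤ,
      HasSum (fun k : ℕ => B (-r) (-(k : ℤ)) * A (-(k : ℤ)) (-p))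
        (if r = p ∧ 0 ≤ r then 1 else 0) ∧
      HasSum (fun k : ℕ => B (-r) ((k : ℤ) + 1) * A ((k : ℤ) + 1) (-p))
        (if r = p ∧ r < 0 then 1 else 0) :=
  stmt_13_general A B hBblock hinv
end
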